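/- arXiv:2109.14740 — 5 statements merged into one kernel-verified Lean document; each statement's English description precedes it below -/
import Mathlib

section
/- Let k ≥ 1, h* ≥ 0, R > 0, and ξ : (0,∞) → [0,∞) continuous, non-increasing, with ∫₀^ε t^{k-1}ξ(t)dt < ∞. Let ψ ∈ C²((0,R)) satisfy ψ''(t) + ((k-1)/t)ψ'(t) = ξ(t) + h*ψ'(t) together with ψ'(t) = (e^{h*t}/t^{k-1})∫₀^t e^{-h*s}s^{k-1}ξ(s)ds. Then ψ''(t) ≤ (1 + h*R)·ψ'(t)/t for all t ∈ (0,R). -/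
open MeasureTheory

set_option maxHeartbeats 1000000 in
/-- With k ≥ 1, h* ≥ 0, R > 0, ξ : (0,∞) → [0,∞) continuous non-increasing with
∫₀^ε t^{k-1}ξ < ∞, and ψ ∈ C²((0,R)) satisfying
ψ'' + ((k-1)/t)ψ' = ξ + h*ψ' and ψ'(t) = (e^{h*t}/t^{k-1})∫₀^t e^{-h*s}s^{k-1}ξ(s)ds,
one has ψ''(t) ≤ (1 + h*R)·ψ'(t)/t on (0,R). -/
theorem stmt2 (k : ℕ) (hk : 1 ≤ k) (hstar R : ℝ) (hhs : 0 ≤ hstar) (hR : 0 < R)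
    (ξ : ℝ → ℝ) (hcont : ContinuousOn ξ (Set.Ioi 0))
    (hanti : AntitoneOn ξ (Set.Ioi 0))
    (hnn : ∀ t ∈ Set.Ioi (0 : ℝ), 0 ≤ ξ t)
    (hint : ∃ ε > (0 : ℝ), IntegrableOn (fun t => t ^ (k - 1) * ξ t) (Set.Ioc 0 ε))
    (ψ : ℝ → ℝ) (hψ : ContDiffOn ℝ 2 ψ (Set.Ioo 0 R))
    (hode : ∀ t ∈ Set.Ioo (0 : ℝ) R,
      deriv (deriv ψ) t + (((k : ℝ) - 1) / t) * deriv ψ t = ξ t + hstar * deriv ψ t)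
    (hderiv : ∀ t ∈ Set.Ioo (0 : ℝ) R,
      deriv ψ t =
        (Real.exp (hstar * t) / t ^ (k - 1)) *
          ∫ s in Set.Ioc (0 : ℝ) t, Real.exp (-hstar * s) * s ^ (k - 1) * ξ s) :
    ∀ t ∈ Set.Ioo (0 : ℝ) R,
      deriv (deriv ψ) t ≤ (1 + hstar * R) * deriv ψ t / t := by
  obtain ⟨ε, hε, hintε⟩ := hint
  intro t ht
  obtain ⟨ht0, htR⟩ := ht
  set n := k - 1 with hn
  have hkn : n + 1 = k := Nat.succ_pred_eq_of_pos hk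
  have hknR : (n : ℝ) + 1 = (k : ℝ) := by exact_mod_cast hkn
  set d := deriv ψ t with hd
  set f : ℝ → ℝ := fun s => Real.exp (-hstar * s) * s ^ n * ξ s with hf
  have hfcont : ContinuousOn f (Set.Ioi 0) := by
    exact (((Real.continuous_exp.comp (continuous_const.mul continuous_id)).continuousOn.mul
      (continuous_pow n).continuousOn).mul hcont)
  have hm0 : 0 < min ε t := lt_min hε ht0
  have hmt : min ε t ≤ t := min_le_right _ _
  have hint1 : IntegrableOn f (Set.Ioc 0 (min ε t)) := by
    apply Integrable.mono' (hintε.mono_set (Set.Ioc_subset_Ioc_right (min_le_left _ _)))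
    · exact (hfcont.mono (fun s hs => hs.1)).aestronglyMeasurable measurableSet_Ioc
    · rw [ae_restrict_iff' measurableSet_Ioc]
      filter_upwards with s hs
      have hs0 : 0 < s := hs.1
      have hξ : 0 ≤ ξ s := hnn s hs0
      have he1 : Real.exp (-hstar * s) ≤ 1 := by
        apply Real.exp_le_one_iff.mpr
        nlinarith
      have hfnn : 0 ≤ f s := by
        have := Real.exp_pos (-hstar * s)
        positivity
      rw [Real.norm_eq_abs, abs_of_nonneg hfnn]
      have hpn : (0:ℝ) ≤ s ^ n * ξ s := by positivity
      calc f s ≤ 1 * (s ^ n * ξ s) := by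
              simp only [hf]
              rw [mul_assoc]
              exact mul_le_mul_of_nonneg_right he1 hpn
        _ = s ^ n * ξ s := one_mul _
  have hint2 : IntegrableOn f (Set.Ioc (min ε t) t) := by
    have hc : ContinuousOn f (Set.Icc (min ε t) t) :=
      hfcont.mono (fun s hs => lt_of_lt_of_le hm0 hs.1)
    exact hc.integrableOn_Icc.mono_set Set.Ioc_subset_Icc_self
  have hintf : IntegrableOn f (Set.Ioc 0 t) := by
    rw [← Set.Ioc_union_Ioc_eq_Ioc hm0.le hmt]
    exact hint1.union hint2
  have hξt : 0 ≤ ξ t := hnn t ht0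
  -- lower bound for the integral
  have hI : Real.exp (-hstar * t) * ξ t * (t ^ k / k) ≤ ∫ s in Set.Ioc (0:ℝ) t, f s := by
    have hpowint : ∫ s in Set.Ioc (0:ℝ) t, s ^ n = t ^ k / k := by
      rw [← intervalIntegral.integral_of_le ht0.le, integral_pow, hkn]
      rw [zero_pow (by omega : k ≠ 0)]
      rw [hknR]
      ring
    have hg : ∫ s in Set.Ioc (0:ℝ) t,
        Real.exp (-hstar * t) * s ^ n * ξ t = Real.exp (-hstar * t) * ξ t * (t ^ k / k) := by
      have heq : (fun s : ℝ => Real.exp (-hstar * t) * s ^ n * ξ t)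
          = fun s : ℝ => (Real.exp (-hstar * t) * ξ t) * s ^ n := by
        funext s; ring
      rw [heq, integral_const_mul, hpowint]
    rw [← hg]
    apply setIntegral_mono_on _ hintf measurableSet_Ioc
    · intro s hs
      have hs0 : 0 < s := hs.1
      have hξs : ξ t ≤ ξ s := hanti hs0 ht0 hs.2
      have he : Real.exp (-hstar * t) ≤ Real.exp (-hstar * s) := by
        apply Real.exp_le_exp.mpr
        nlinarith [hs.2]
      have hpn : (0:ℝ) ≤ s ^ n := by positivity
      calc Real.exp (-hstar * t) * s ^ n * ξ t
          ≤ Real.exp (-hstar * s) * s ^ n * ξ t := by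
            exact mul_le_mul_of_nonneg_right
              (mul_le_mul_of_nonneg_right he hpn) hξt
        _ ≤ Real.exp (-hstar * s) * s ^ n * ξ s := by
            apply mul_le_mul_of_nonneg_left hξs
            positivity
    · exact (Continuous.mul (by continuity) continuous_const).integrableOn_Ioc
  -- the key bound t ξ t ≤ k d
  have hkey : t * ξ t ≤ (k : ℝ) * d := by
    have hdval := hderiv t ⟨ht0, htR⟩
    rw [← hd] at hdval
    have hc : (0:ℝ) < Real.exp (hstar * t) / t ^ n := by positivity
    have h2 : Real.exp (hstar * t) / t ^ n *
        (Real.exp (-hstar * t) * ξ t * (t ^ k / k)) ≤ d := by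
      rw [hdval]
      exact mul_le_mul_of_nonneg_left hI hc.le
    have hexp : Real.exp (hstar * t) * Real.exp (-hstar * t) = 1 := by
      rw [← Real.exp_add]; simp
    have htk : t ^ k = t ^ n * t := by rw [← hkn]; ring
    have hsimp : Real.exp (hstar * t) / t ^ n *
        (Real.exp (-hstar * t) * ξ t * (t ^ k / k)) = t * ξ t / k := by
      rw [htk, show -hstar * t = -(hstar * t) by ring, Real.exp_neg]
      have he := (Real.exp_pos (hstar * t)).ne'
      field_simp
    rw [hsimp] at h2
    have hkpos : (0:ℝ) < (k:ℝ) := by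
      have : (1:ℝ) ≤ (k:ℝ) := by exact_mod_cast hk
      linarith
    rw [div_le_iff₀ hkpos] at h2
    nlinarith
  have hdnn : 0 ≤ d := by
    have hkpos : (0:ℝ) < (k:ℝ) := by positivity
    nlinarith [mul_nonneg ht0.le hξt]
  -- conclude
  rw [le_div_iff₀ ht0]
  have h1 := hode t ⟨ht0, htR⟩
  rw [← hd] at h1
  have e : ((k:ℝ) - 1) / t * d * t = ((k:ℝ) - 1) * d := by field_simp
  have h1' : deriv (deriv ψ) t * t + ((k:ℝ) - 1) * d = ξ t * t + hstar * d * t := by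
    linear_combination t * h1 - e
  have h3 : hstar * d * t ≤ hstar * d * R :=
    mul_le_mul_of_nonneg_left htR.le (mul_nonneg hhs hdnn)
  nlinarith [h1', h3, hkey, hdnn]
end

section
/- Let n ≥ 2, k ∈ {1,…,n−1}, R > 0, h ≥ 0 with hR < k, and h* ≥ max{h, h/(k−hR)}. Let ξ : (0,∞) → [0,∞) be continuous, non-increasing, with ∫₀^ε t^{k-1}ξ(t)dt < ∞, and let ψ solve (t^{k-1}e^{-h*t}ψ')' = e^{-h*t}t^{k-1}ξ on (0,R) with lim_{t→0} t^{k-1}ψ'(t) = 0. Then w(x) = ψ(|x−x₀|) satisfies P_k^-(∇²w) − h|∇w| ≥ ξ(r)/(1 + h*R) pointwise on B_R(x₀)∖{x₀}. -/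
/-!
For a radial function `w = ψ(|x - x₀|)` with `r = |x - x₀|`, the Hessian has eigenvalue `ψ''(r)`
in the radial direction and `ψ'(r)/r` on its orthogonal complement, so the sum of its `k`
smallest eigenvalues is at least `min (ψ'' + (k-1) ψ'/r) (k ψ'/r)`, while `|∇w| = |ψ'(r)|`.
The ODE gives `ψ'' + (k-1) ψ'/r = ξ + h* ψ'`, and, because `t ↦ e^{-h* t} ξ(t)` is
non-increasing, integrating it from `0` yields `ψ'(r) ≥ r ξ(r)/k`. Both branches of the minimum
then dominate `ξ/(1 + h* R) + h ψ'`, the second one through `k/(1 + h* R) ≤ k - hR`, which is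
where the condition `h* ≥ h/(k - hR)` enters.
-/

open MeasureTheory Filter Set Real
open scoped RealInnerProductSpace Topology

/-- P_k^-(∇²w)(x): the sum of the k smallest eigenvalues of the Hessian of w at x,
via its min-max characterization as the infimum of the trace of the Hessian over
k-dimensional subspaces (orthonormal k-tuples). -/
noncomputable def PkHess (n k : ℕ) (w : EuclideanSpace ℝ (Fin n) → ℝ)
    (x : EuclideanSpace ℝ (Fin n)) : ℝ :=
  sInf {t : ℝ | ∃ e : Fin k → EuclideanSpace ℝ (Fin n), Orthonormal ℝ e ∧
    t = ∑ i, iteratedFDeriv ℝ 2 w x ![e i, e i]}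

section RadialCalculus

variable {E : Type*} [NormedAddCommGroup E] [InnerProductSpace ℝ E]

theorem hasFDerivAt_norm_of_ne_zero {z : E} (hz : z ≠ 0) :
    HasFDerivAt (‖·‖) (innerSL ℝ (‖z‖⁻¹ • z)) z := by
  have h := (hasStrictFDerivAt_norm_sq z).hasFDerivAt.sqrt (by positivity)
  simp only [Real.sqrt_sq (norm_nonneg _)] at h
  refine h.congr_fderiv ?_
  ext v
  have : ‖z‖ ≠ 0 := norm_ne_zero_iff.2 hz
  simp only [one_div, mul_inv_rev, smul_apply, coe_innerSL_apply, nsmul_eq_mul, Nat.cast_ofNat,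
    smul_eq_mul, map_smul]
  field_simp

variable {ψ : ℝ → ℝ} {x₀ x : E}

theorem hasFDerivAt_radial {ψ' : ℝ} (hx : x ≠ x₀) (hψ : HasDerivAt ψ ψ' ‖x - x₀‖) :
    HasFDerivAt (fun y => ψ ‖y - x₀‖) (innerSL ℝ ((ψ' / ‖x - x₀‖) • (x - x₀))) x := by
  have hN := (hasFDerivAt_norm_of_ne_zero (sub_ne_zero.2 hx)).comp x
    ((hasFDerivAt_id x).sub_const x₀)
  refine (hψ.comp_hasFDerivAt x hN).congr_fderiv ?_
  ext v
  simp only [map_smul, map_sub, ContinuousLinearMap.comp_id, smul_apply, sub_apply,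
    coe_innerSL_apply, smul_eq_mul, div_eq_inv_mul]
  ring

theorem norm_gradient_radial [CompleteSpace E] {ψ' : ℝ} (hx : x ≠ x₀)
    (hψ : HasDerivAt ψ ψ' ‖x - x₀‖) :
    ‖gradient (fun y => ψ ‖y - x₀‖) x‖ = |ψ'| := by
  have hd : ‖x - x₀‖ ≠ 0 := norm_ne_zero_iff.2 (sub_ne_zero.2 hx)
  rw [(hasGradientAt_iff_hasFDerivAt.2 (hasFDerivAt_radial hx hψ)).gradient, norm_smul,
    Real.norm_eq_abs, abs_div, abs_norm, div_mul_cancel₀ _ hd]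

theorem iteratedFDeriv_two_radial_apply (hx : x ≠ x₀)
    (h1 : ∀ᶠ t in 𝓝 ‖x - x₀‖, DifferentiableAt ℝ ψ t)
    (h2 : DifferentiableAt ℝ (deriv ψ) ‖x - x₀‖) (v : E) :
    iteratedFDeriv ℝ 2 (fun y => ψ ‖y - x₀‖) x ![v, v] =
      deriv ψ ‖x - x₀‖ / ‖x - x₀‖ * ‖v‖ ^ 2 +
        (deriv (deriv ψ) ‖x - x₀‖ - deriv ψ ‖x - x₀‖ / ‖x - x₀‖) *
          ⟪‖x - x₀‖⁻¹ • (x - x₀), v⟫ ^ 2 := by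
  set d := ‖x - x₀‖ with hd_def
  have hd : d ≠ 0 := norm_ne_zero_iff.2 (sub_ne_zero.2 hx)
  have hfderiv : fderiv ℝ (fun y => ψ ‖y - x₀‖) =ᶠ[𝓝 x]
      fun y => innerSL ℝ ((deriv ψ ‖y - x₀‖ / ‖y - x₀‖) • (y - x₀)) := by
    have hN : Tendsto (fun y : E => ‖y - x₀‖) (𝓝 x) (𝓝 d) :=
      (continuous_norm.comp (continuous_id.sub continuous_const)).tendsto x
    filter_upwards [hN.eventually h1, isOpen_ne.mem_nhds hx] with y hy hyx
    exact (hasFDerivAt_radial hyx hy.hasDerivAt).fderiv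
  have hquot : HasDerivAt (fun t => deriv ψ t / t)
      ((deriv (deriv ψ) d * d - deriv ψ d * 1) / d ^ 2) d :=
    h2.hasDerivAt.div (hasDerivAt_id d) hd
  have hgrad : HasFDerivAt (fun y => (deriv ψ ‖y - x₀‖ / ‖y - x₀‖) • (y - x₀)) _ x :=
    (hasFDerivAt_radial hx hquot).smul ((hasFDerivAt_id x).sub_const x₀)
  -- Over `ℝ` the conjugate-linear `innerSL ℝ` is linear, so it composes with derivatives.
  have hhess : HasFDerivAt (fun y => innerSL ℝ ((deriv ψ ‖y - x₀‖ / ‖y - x₀‖) • (y - x₀)))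
      _ x :=
    (innerSL ℝ : E →L[ℝ] E →L[ℝ] ℝ).hasFDerivAt.comp x hgrad
  rw [iteratedFDeriv_two_apply, hfderiv.fderiv_eq, hhess.fderiv]
  have hinner (w : E) : (innerSL ℝ : E →L[ℝ] E →L[ℝ] ℝ) w = innerSL ℝ w := rfl
  simp only [Matrix.cons_val_zero, Matrix.cons_val_one, ContinuousLinearMap.comp_apply,
    add_apply, smul_apply, ContinuousLinearMap.id_apply, hinner,
    ContinuousLinearMap.smulRight_apply, innerSL_apply_apply, inner_add_left, real_inner_smul_left,
    real_inner_self_eq_norm_sq, ← hd_def]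
  field_simp

end RadialCalculus

section Orthonormal

variable {E ι : Type*} [NormedAddCommGroup E] [InnerProductSpace ℝ E] [Fintype ι]
  {e : ι → E}

theorem Orthonormal.sum_inner_sq_le (he : Orthonormal ℝ e) (u : E) :
    ∑ i, ⟪u, e i⟫ ^ 2 ≤ ‖u‖ ^ 2 := by
  simpa [real_inner_comm] using he.sum_inner_products_le (s := Finset.univ) (x := u)

theorem Orthonormal.card_mul_add_min_le_sum (he : Orthonormal ℝ e) {u : E} (hu : ‖u‖ = 1)
    (a b : ℝ) :
    Fintype.card ι * a + min b 0 ≤ ∑ i, (a + b * ⟪u, e i⟫ ^ 2) := by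
  have hle : ∑ i, ⟪u, e i⟫ ^ 2 ≤ 1 := by simpa [hu] using he.sum_inner_sq_le u
  have hnonneg : 0 ≤ ∑ i, ⟪u, e i⟫ ^ 2 := Finset.sum_nonneg fun i _ => sq_nonneg _
  rw [Finset.sum_add_distrib, ← Finset.mul_sum, Finset.sum_const, Finset.card_univ, nsmul_eq_mul]
  rcases le_total b 0 with hb | hb
  · rw [min_eq_left hb]; nlinarith
  · rw [min_eq_right hb]; nlinarith

end Orthonormal

theorem le_PkHess {n k : ℕ} (hk : k ≤ n) {w : EuclideanSpace ℝ (Fin n) → ℝ}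
    {x : EuclideanSpace ℝ (Fin n)} {m : ℝ}
    (H : ∀ e : Fin k → EuclideanSpace ℝ (Fin n), Orthonormal ℝ e →
      m ≤ ∑ i, iteratedFDeriv ℝ 2 w x ![e i, e i]) :
    m ≤ PkHess n k w x := by
  refine le_csInf ⟨_, fun i => EuclideanSpace.basisFun (Fin n) ℝ (Fin.castLE hk i),
    (EuclideanSpace.basisFun (Fin n) ℝ).orthonormal.comp _ (Fin.castLE_injective hk), rfl⟩ ?_
  rintro _ ⟨e, he, rfl⟩
  exact H e he

theorem min_le_PkHess_radial {n k : ℕ} (hk : k ≤ n) {ψ : ℝ → ℝ}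
    {x₀ x : EuclideanSpace ℝ (Fin n)} (hx : x ≠ x₀)
    (h1 : ∀ᶠ t in 𝓝 ‖x - x₀‖, DifferentiableAt ℝ ψ t)
    (h2 : DifferentiableAt ℝ (deriv ψ) ‖x - x₀‖) :
    min (deriv (deriv ψ) ‖x - x₀‖ + (k - 1) * (deriv ψ ‖x - x₀‖ / ‖x - x₀‖))
        (k * (deriv ψ ‖x - x₀‖ / ‖x - x₀‖)) ≤
      PkHess n k (fun y => ψ ‖y - x₀‖) x := by
  refine le_PkHess hk fun e he => ?_
  have hu := norm_smul_inv_norm (𝕜 := ℝ) (sub_ne_zero.2 hx)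
  simp only [iteratedFDeriv_two_radial_apply hx h1 h2, he.1 _, one_pow, mul_one]
  refine le_trans (le_of_eq ?_) (he.card_mul_add_min_le_sum hu _ _)
  rw [Fintype.card_fin, ← min_add_add_left]
  congr 1 <;> ring

section WeightedODE

variable {ψ ξ : ℝ → ℝ} {a : ℝ} {m : ℕ}

theorem hasDerivAt_pow_mul_exp_mul_deriv {t ψ'' : ℝ} (hψ : HasDerivAt (deriv ψ) ψ'' t) :
    HasDerivAt (fun s => s ^ m * exp (-a * s) * deriv ψ s)
      ((m * t ^ (m - 1) - a * t ^ m) * exp (-a * t) * deriv ψ t +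
        t ^ m * exp (-a * t) * ψ'') t := by
  have hexp : HasDerivAt (fun s => exp (-a * s)) (exp (-a * t) * -a) t := by
    simpa using ((hasDerivAt_id t).const_mul (-a)).exp
  exact (((hasDerivAt_pow m t).fun_mul hexp).fun_mul hψ).congr_deriv (by ring)

theorem deriv_deriv_eq_of_ode {t : ℝ} (ht : 0 < t) (hψ : DifferentiableAt ℝ (deriv ψ) t)
    (hode : deriv (fun s => s ^ m * exp (-a * s) * deriv ψ s) t = exp (-a * t) * t ^ m * ξ t) :
    deriv (deriv ψ) t = ξ t + a * deriv ψ t - m * deriv ψ t / t := by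
  have hflux := (hasDerivAt_pow_mul_exp_mul_deriv (a := a) (m := m) hψ.hasDerivAt).deriv
  rw [hode] at hflux
  have hpow : (m : ℝ) * t ^ (m - 1) = m * t ^ m / t := by
    rcases m with _ | m
    · simp
    · field_simp; simp [pow_succ]
  rw [hpow] at hflux
  field_simp at hflux ⊢
  linear_combination -hflux

theorem div_le_deriv_of_ode {R d : ℝ} (hψ : DifferentiableOn ℝ (deriv ψ) (Ioo 0 R))
    (hode : ∀ t ∈ Ioo 0 R,
      deriv (fun s => s ^ m * exp (-a * s) * deriv ψ s) t = exp (-a * t) * t ^ m * ξ t)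
    (hanti : AntitoneOn ξ (Ioi 0)) (ha : 0 ≤ a)
    (hlim : Tendsto (fun t => t ^ m * deriv ψ t) (𝓝[>] 0) (𝓝 0))
    (hd : d ∈ Ioo 0 R) (hξ : 0 ≤ ξ d) :
    d * ξ d / (m + 1) ≤ deriv ψ d := by
  set C := exp (-a * d) * ξ d
  set φ : ℝ → ℝ := fun s => s ^ m * exp (-a * s) * deriv ψ s - C / (m + 1) * s ^ (m + 1)
  have hsub : Ioc 0 d ⊆ Ioo 0 R := fun t ht => ⟨ht.1, ht.2.trans_lt hd.2⟩
  have hφ' : ∀ t ∈ Ioo 0 d, HasDerivAt φ (t ^ m * (exp (-a * t) * ξ t - C)) t := by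
    intro t ht
    have htR : t ∈ Ioo 0 R := hsub (Ioo_subset_Ioc_self ht)
    have hflux := hasDerivAt_pow_mul_exp_mul_deriv (a := a) (m := m)
      ((hψ t htR).differentiableAt (isOpen_Ioo.mem_nhds htR)).hasDerivAt
    rw [← hflux.deriv, hode t htR] at hflux
    refine (hflux.sub ((hasDerivAt_pow (m + 1) t).const_mul (C / (m + 1)))).congr_deriv ?_
    push_cast
    field_simp
  have hmono : MonotoneOn φ (Ioc 0 d) := by
    have hψc : ContinuousOn (deriv ψ) (Ioc 0 d) := hψ.continuousOn.mono hsub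
    refine monotoneOn_of_hasDerivWithinAt_nonneg (convex_Ioc 0 d) (by fun_prop)
      (f' := fun t => t ^ m * (exp (-a * t) * ξ t - C)) (fun t ht => ?_) (fun t ht => ?_) <;>
      rw [interior_Ioc] at ht
    · exact (hφ' t ht).hasDerivWithinAt
    · refine mul_nonneg (pow_nonneg ht.1.le m) (sub_nonneg.2 ?_)
      exact mul_le_mul (exp_le_exp.2 (by nlinarith [ht.2])) (hanti ht.1 hd.1 ht.2.le) hξ
        (exp_pos _).le
  have hφ0 : Tendsto φ (𝓝[>] 0) (𝓝 0) := by
    have hcont {f : ℝ → ℝ} (hf : Continuous f) : Tendsto f (𝓝[>] 0) (𝓝 (f 0)) :=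
      (hf.tendsto 0).mono_left nhdsWithin_le_nhds
    have := ((hcont (f := fun s => exp (-a * s)) (by fun_prop)).mul hlim).sub
      (hcont (f := fun s => C / (m + 1) * s ^ (m + 1)) (by fun_prop))
    simp only [mul_zero, zero_pow (Nat.succ_ne_zero m), sub_zero] at this
    refine this.congr fun s => ?_
    simp only [φ]
    ring
  have hφd : 0 ≤ φ d := by
    refine le_of_tendsto hφ0 ?_
    filter_upwards [Ioc_mem_nhdsGT hd.1] with t ht
    exact hmono ht (right_mem_Ioc.2 hd.1) ht.2
  have hφd' : φ d = exp (-a * d) * d ^ m * (deriv ψ d - d * ξ d / (m + 1)) := by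
    simp only [φ, C]; ring
  rw [hφd'] at hφd
  exact sub_nonneg.1 (nonneg_of_mul_nonneg_right hφd (mul_pos (exp_pos _) (pow_pos hd.1 m)))

end WeightedODE

theorem div_one_add_mul_add_mul_le_min {k d R h a ξ p : ℝ} (hd : 0 < d) (hdR : d < R)
    (hh : 0 ≤ h) (hhR : h * R < k) (ha : max h (h / (k - h * R)) ≤ a) (hξ : 0 ≤ ξ)
    (hp : d * ξ / k ≤ p) :
    ξ / (1 + a * R) + h * p ≤ min (ξ + a * p) (k * (p / d)) := by
  have hkR : 0 < k - h * R := sub_pos.2 hhR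
  have hk : 0 < k := by nlinarith
  have ha₁ : h ≤ a := (le_max_left _ _).trans ha
  have ha₂ : h ≤ a * (k - h * R) := (div_le_iff₀ hkR).1 ((le_max_right _ _).trans ha)
  have hden : 0 < 1 + a * R := by nlinarith
  have hp₀ : 0 ≤ p := (by positivity : 0 ≤ d * ξ / k).trans hp
  refine le_min ?_ ?_
  · linarith [div_le_self hξ (by nlinarith : 1 ≤ 1 + a * R), mul_le_mul_of_nonneg_right ha₁ hp₀]
  · have hkey : k / (1 + a * R) ≤ k - h * R := by
      rw [div_le_iff₀ hden]
      nlinarith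
    have hξp : ξ / k ≤ p / d := by
      rw [div_le_div_iff₀ hk hd]
      rw [div_le_iff₀ hk] at hp
      linarith
    calc ξ / (1 + a * R) + h * p = ξ / k * (k / (1 + a * R)) + h * p := by
          field_simp
      _ ≤ p / d * (k - h * R) + h * p := by gcongr
      _ ≤ p / d * (k - h * d) + h * p := by gcongr
      _ = k * (p / d) := by field_simp; ring

theorem stmt5_general (n k : ℕ) (hk1 : 1 ≤ k) (hkn : k ≤ n - 1)
    (R h hstar : ℝ) (hh : 0 ≤ h) (hhR : h * R < k)
    (hhs : max h (h / ((k : ℝ) - h * R)) ≤ hstar)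
    (ξ : ℝ → ℝ)
    (hanti : AntitoneOn ξ (Set.Ioi 0)) (hnn : ∀ t ∈ Set.Ioi (0 : ℝ), 0 ≤ ξ t)
    (ψ : ℝ → ℝ) (hψ : ContDiffOn ℝ 2 ψ (Set.Ioo 0 R))
    (hode : ∀ t ∈ Set.Ioo (0 : ℝ) R,
      deriv (fun s => s ^ (k - 1) * Real.exp (-hstar * s) * deriv ψ s) t =
        Real.exp (-hstar * t) * t ^ (k - 1) * ξ t)
    (hlim : Filter.Tendsto (fun t => t ^ (k - 1) * deriv ψ t)
      (nhdsWithin 0 (Set.Ioi 0)) (nhds 0))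
    (x₀ : EuclideanSpace ℝ (Fin n)) :
    ∀ x ∈ Metric.ball x₀ R, x ≠ x₀ →
      ξ ‖x - x₀‖ / (1 + hstar * R) ≤
        PkHess n k (fun y => ψ ‖y - x₀‖) x -
          h * ‖gradient (fun y => ψ ‖y - x₀‖) x‖ := by
  intro x hx hne
  set r := ‖x - x₀‖
  have hr : r ∈ Ioo 0 R := ⟨norm_pos_iff.2 (sub_ne_zero.2 hne), mem_ball_iff_norm.1 hx⟩
  have hψ₁ : ∀ t ∈ Ioo 0 R, DifferentiableAt ℝ ψ t := fun t ht =>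
    (hψ.differentiableOn two_ne_zero t ht).differentiableAt (isOpen_Ioo.mem_nhds ht)
  have hψ₂ : DifferentiableOn ℝ (deriv ψ) (Ioo 0 R) :=
    (hψ.deriv_of_isOpen isOpen_Ioo (by norm_num) (m := 1)).differentiableOn one_ne_zero
  have hψ₂r : DifferentiableAt ℝ (deriv ψ) r := (hψ₂ r hr).differentiableAt (isOpen_Ioo.mem_nhds hr)
  have hk : ((k - 1 : ℕ) : ℝ) + 1 = k := by rw [Nat.cast_sub hk1]; ring
  have hslope := div_le_deriv_of_ode hψ₂ hode hanti
    (hh.trans ((le_max_left _ _).trans hhs)) hlim hr (hnn r hr.1)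
  rw [hk] at hslope
  have hψ'' := deriv_deriv_eq_of_ode hr.1 hψ₂r (hode r hr)
  rw [norm_gradient_radial hne (hψ₁ r hr).hasDerivAt,
    abs_of_nonneg ((div_nonneg (mul_nonneg hr.1.le (hnn r hr.1)) (by positivity)).trans hslope)]
  calc ξ r / (1 + hstar * R)
      ≤ min (ξ r + hstar * deriv ψ r) (k * (deriv ψ r / r)) - h * deriv ψ r := by
        linarith [div_one_add_mul_add_mul_le_min hr.1 hr.2 hh hhR hhs (hnn r hr.1) hslope]
    _ = min (deriv (deriv ψ) r + (k - 1) * (deriv ψ r / r)) (k * (deriv ψ r / r)) -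
          h * deriv ψ r := by
        rw [hψ'', ← hk]
        ring_nf
    _ ≤ PkHess n k (fun y => ψ ‖y - x₀‖) x - h * deriv ψ r := by
        gcongr
        exact min_le_PkHess_radial (by omega) hne
          (eventually_of_mem (isOpen_Ioo.mem_nhds hr) hψ₁) hψ₂r

/-- Radial ODE lemma. Let n ≥ 2, k ∈ {1,…,n−1}, R > 0, h ≥ 0 with hR < k,
h* ≥ max{h, h/(k−hR)}; let ξ : (0,∞) → [0,∞) be continuous, non-increasing with
∫₀^ε t^{k-1}ξ < ∞, and ψ solve (t^{k-1}e^{-h*t}ψ')' = e^{-h*t}t^{k-1}ξ on (0,R) with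
t^{k-1}ψ'(t) → 0 as t → 0. Then w(x) = ψ(|x−x₀|) satisfies
P_k^-(∇²w) − h|∇w| ≥ ξ(r)/(1 + h*R) on B_R(x₀)∖{x₀}. -/
theorem stmt5 (n k : ℕ) (hn : 2 ≤ n) (hk1 : 1 ≤ k) (hkn : k ≤ n - 1)
    (R h hstar : ℝ) (hR : 0 < R) (hh : 0 ≤ h) (hhR : h * R < k)
    (hhs : max h (h / ((k : ℝ) - h * R)) ≤ hstar)
    (ξ : ℝ → ℝ) (hcont : ContinuousOn ξ (Set.Ioi 0))
    (hanti : AntitoneOn ξ (Set.Ioi 0)) (hnn : ∀ t ∈ Set.Ioi (0 : ℝ), 0 ≤ ξ t)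
    (hint : ∃ ε > (0 : ℝ), IntegrableOn (fun t => t ^ (k - 1) * ξ t) (Set.Ioc 0 ε))
    (ψ : ℝ → ℝ) (hψ : ContDiffOn ℝ 2 ψ (Set.Ioo 0 R))
    (hode : ∀ t ∈ Set.Ioo (0 : ℝ) R,
      deriv (fun s => s ^ (k - 1) * Real.exp (-hstar * s) * deriv ψ s) t =
        Real.exp (-hstar * t) * t ^ (k - 1) * ξ t)
    (hlim : Filter.Tendsto (fun t => t ^ (k - 1) * deriv ψ t)
      (nhdsWithin 0 (Set.Ioi 0)) (nhds 0))
    (x₀ : EuclideanSpace ℝ (Fin n)) :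
    ∀ x ∈ Metric.ball x₀ R, x ≠ x₀ →
      ξ ‖x - x₀‖ / (1 + hstar * R) ≤
        PkHess n k (fun y => ψ ‖y - x₀‖) x -
          h * ‖gradient (fun y => ψ ‖y - x₀‖) x‖ :=
  stmt5_general n k hk1 hkn R h hstar hh hhR hhs ξ hanti hnn ψ hψ hode hlim x₀
end

section
/- Let k ≥ 3, h* ≥ 0, R > 0, a > 0, and S : [0,∞) → [0,∞) non-increasing with S = 1 on [0,1] and Ŝ = ∫₀^∞ tS(t)dt < ∞. Define ξ(t) = k S(t/a) and ψ(t) = ∫₀^t (e^{h*s}/s^{k-1})[∫₀^s e^{-h*σ}σ^{k-1}ξ(σ)dσ]ds. Then ψ(t) ≤ (e^{h*R} k Ŝ /(k−2))·a² for all t ∈ (0,R]. -/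
open MeasureTheory Set Real

/-!
Exchanging the order of integration writes `ψ(t)` as
`∫₀ᵗ (∫_σ^t e^{h* s} s^{1-k} ds) e^{-h* σ} σ^{k-1} ξ(σ) dσ`. The inner integral is at most
`e^{h* R} σ^{2-k} / (k-2)`, so `ψ(t) ≤ e^{h* R} / (k-2) · ∫₀^∞ σ ξ(σ) dσ`, and the substitution
`σ = a τ` turns the last integral into `k a² Ŝ`. The exchange is legitimate because for
`σ ≤ s ≤ R` the kernel `e^{h*(s-σ)} (σ/s)^{k-1}` is bounded by `e^{h* R}`.
-/

theorem integral_Ioc_mul_integral_Ioc_swap {f g : ℝ → ℝ} {c t : ℝ}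
    (hfg : Integrable ({p : ℝ × ℝ | p.2 ≤ p.1}.indicator fun p => f p.1 * g p.2)
      ((volume.restrict (Ioc c t)).prod (volume.restrict (Ioc c t)))) :
    ∫ s in Ioc c t, f s * ∫ σ in Ioc c s, g σ =
      ∫ σ in Ioc c t, (∫ s in Icc σ t, f s) * g σ := by
  have inner_snd : ∀ s ∈ Ioc c t, ∫ σ in Ioc c t,
      {p : ℝ × ℝ | p.2 ≤ p.1}.indicator (fun p => f p.1 * g p.2) (s, σ) =
        f s * ∫ σ in Ioc c s, g σ := by
    intro s hs
    have : (fun σ => {p : ℝ × ℝ | p.2 ≤ p.1}.indicator (fun p => f p.1 * g p.2) (s, σ)) =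
        (Iic s).indicator fun σ => f s * g σ := by
      ext σ; by_cases hσ : σ ≤ s <;> simp [indicator, hσ]
    rw [this, setIntegral_indicator measurableSet_Iic, Ioc_inter_Iic, min_eq_right hs.2,
      integral_const_mul]
  have inner_fst : ∀ σ ∈ Ioc c t, ∫ s in Ioc c t,
      {p : ℝ × ℝ | p.2 ≤ p.1}.indicator (fun p => f p.1 * g p.2) (s, σ) =
        (∫ s in Icc σ t, f s) * g σ := by
    intro σ hσ
    have : (fun s => {p : ℝ × ℝ | p.2 ≤ p.1}.indicator (fun p => f p.1 * g p.2) (s, σ)) =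
        (Ici σ).indicator fun s => f s * g σ := by
      ext s; by_cases hσ : σ ≤ s <;> simp [indicator, hσ]
    have hinter : Ioc c t ∩ Ici σ = Icc σ t := by
      ext s
      simp only [mem_inter_iff, mem_Ioc, mem_Ici, mem_Icc]
      constructor
      · rintro ⟨⟨-, hst⟩, hσs⟩; exact ⟨hσs, hst⟩
      · rintro ⟨hσs, hst⟩; exact ⟨⟨hσ.1.trans_le hσs, hst⟩, hσs⟩
    rw [this, setIntegral_indicator measurableSet_Ici, hinter, integral_mul_const]
  calc ∫ s in Ioc c t, f s * ∫ σ in Ioc c s, g σ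
      = ∫ s in Ioc c t, ∫ σ in Ioc c t,
          {p : ℝ × ℝ | p.2 ≤ p.1}.indicator (fun p => f p.1 * g p.2) (s, σ) :=
        (setIntegral_congr_fun measurableSet_Ioc inner_snd).symm
    _ = ∫ σ in Ioc c t, ∫ s in Ioc c t,
          {p : ℝ × ℝ | p.2 ≤ p.1}.indicator (fun p => f p.1 * g p.2) (s, σ) :=
        integral_integral_swap hfg
    _ = ∫ σ in Ioc c t, (∫ s in Icc σ t, f s) * g σ :=
        setIntegral_congr_fun measurableSet_Ioc inner_fst

theorem integrable_indicator_snd_le_fst_of_norm_le {f g ξ : ℝ → ℝ} {c t C : ℝ}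
    (hf : AEStronglyMeasurable f (volume.restrict (Ioc c t)))
    (hg : AEStronglyMeasurable g (volume.restrict (Ioc c t))) (hξ : IntegrableOn ξ (Ioc c t))
    (hC : 0 ≤ C) (hbound : ∀ s ∈ Ioc c t, ∀ σ ∈ Ioc c s, ‖f s * g σ‖ ≤ C * ‖ξ σ‖) :
    Integrable ({p : ℝ × ℝ | p.2 ≤ p.1}.indicator fun p => f p.1 * g p.2)
      ((volume.restrict (Ioc c t)).prod (volume.restrict (Ioc c t))) := by
  refine Integrable.mono' ((hξ.norm.const_mul C).comp_snd _)
    ((hf.comp_fst.mul hg.comp_snd).indicator (measurableSet_le measurable_snd measurable_fst)) ?_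
  have hmem : ∀ᵐ p ∂(volume.restrict (Ioc c t)).prod (volume.restrict (Ioc c t)),
      p ∈ Ioc c t ×ˢ Ioc c t := by
    rw [Measure.prod_restrict]
    exact ae_restrict_mem (measurableSet_Ioc.prod measurableSet_Ioc)
  filter_upwards [hmem] with ⟨s, σ⟩ ⟨hs, hσ⟩
  by_cases hσs : σ ≤ s
  · simpa [indicator, hσs] using hbound s hs σ ⟨hσ.1, hσs⟩
  · simpa [indicator, hσs] using mul_nonneg hC (norm_nonneg (ξ σ))

theorem integral_rpow_neg_le {p σ t : ℝ} (hp : 1 < p) (hσ : 0 < σ) (hσt : σ ≤ t) :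
    ∫ s in σ..t, s ^ (-p) ≤ σ ^ (1 - p) / (p - 1) := by
  have h0 : (0 : ℝ) ∉ uIcc σ t := by
    rw [uIcc_of_le hσt]; exact fun h => hσ.not_ge h.1
  rw [integral_rpow (Or.inr ⟨by linarith, h0⟩), neg_add_eq_sub, ← neg_div_neg_eq, neg_sub,
    neg_sub]
  have : 0 ≤ t ^ (1 - p) := rpow_nonneg (hσ.le.trans hσt) _
  exact div_le_div_of_nonneg_right (by linarith) (by linarith)

theorem exp_mul_div_pow_mul_le {h R s σ : ℝ} (n : ℕ) (hh : 0 ≤ h) (hσ : 0 < σ) (hσs : σ ≤ s)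
    (hsR : s ≤ R) : exp (h * s) / s ^ n * (exp (-h * σ) * σ ^ n) ≤ exp (h * R) := by
  have hs : 0 < s := hσ.trans_le hσs
  calc exp (h * s) / s ^ n * (exp (-h * σ) * σ ^ n)
      = exp (h * s) * exp (-h * σ) * (σ ^ n / s ^ n) := by field_simp
    _ ≤ exp (h * R) * 1 * 1 := by
      gcongr ?_ * ?_ * ?_
      · exact exp_le_exp.mpr (by nlinarith)
      · exact exp_le_one_iff.mpr (by nlinarith)
      · exact div_le_one_of_le₀ (pow_le_pow_left₀ hσ.le hσs n) (by positivity)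
    _ = exp (h * R) := by ring

theorem integral_Icc_exp_mul_div_pow_le {h R σ t : ℝ} {n : ℕ} (hh : 0 ≤ h) (hn : 2 ≤ n)
    (hσ : 0 < σ) (hσt : σ ≤ t) (htR : t ≤ R) :
    ∫ s in Icc σ t, exp (h * s) / s ^ n ≤ exp (h * R) * (σ ^ (1 - (n : ℝ)) / (n - 1)) := by
  have hpos : ∀ s ∈ Icc σ t, 0 < s := fun s hs => hσ.trans_le hs.1
  have hcont : ContinuousOn (fun s : ℝ => s ^ (-(n : ℝ))) (Icc σ t) :=
    continuousOn_id.rpow_const fun s hs => Or.inl (hpos s hs).ne'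
  calc ∫ s in Icc σ t, exp (h * s) / s ^ n
      ≤ ∫ s in Icc σ t, exp (h * R) * s ^ (-(n : ℝ)) := by
        refine setIntegral_mono_on ?_ (continuousOn_const.mul hcont).integrableOn_Icc
          measurableSet_Icc fun s hs => ?_
        · exact ContinuousOn.integrableOn_Icc (by
            fun_prop (disch := exact fun s hs => pow_ne_zero _ (hpos s hs).ne'))
        · rw [rpow_neg (hpos s hs).le, rpow_natCast, div_eq_mul_inv]
          have := hpos s hs
          gcongr
          nlinarith [hs.2]
    _ = exp (h * R) * ∫ s in σ..t, s ^ (-(n : ℝ)) := by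
        rw [integral_const_mul, integral_Icc_eq_integral_Ioc, intervalIntegral.integral_of_le hσt]
    _ ≤ exp (h * R) * (σ ^ (1 - (n : ℝ)) / (n - 1)) := by
        gcongr
        exact integral_rpow_neg_le (by exact_mod_cast hn) hσ hσt

theorem integral_Icc_exp_mul_div_pow_mul_le {h R σ t x : ℝ} {n : ℕ} (hh : 0 ≤ h) (hn : 2 ≤ n)
    (hσ : 0 < σ) (hσt : σ ≤ t) (htR : t ≤ R) (hx : 0 ≤ x) :
    (∫ s in Icc σ t, exp (h * s) / s ^ n) * (exp (-h * σ) * σ ^ n * x) ≤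
      exp (h * R) / (n - 1) * (σ * x) := by
  have hint : 0 ≤ ∫ s in Icc σ t, exp (h * s) / s ^ n :=
    setIntegral_nonneg measurableSet_Icc fun s hs => by
      have : 0 < s := hσ.trans_le hs.1
      positivity
  calc (∫ s in Icc σ t, exp (h * s) / s ^ n) * (exp (-h * σ) * σ ^ n * x)
      ≤ exp (h * R) * (σ ^ (1 - (n : ℝ)) / (n - 1)) * (1 * σ ^ n * x) := by
        have hI := integral_Icc_exp_mul_div_pow_le hh hn hσ hσt htR
        have hW : exp (-h * σ) * σ ^ n * x ≤ 1 * σ ^ n * x := by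
          gcongr
          exact exp_le_one_iff.mpr (by nlinarith)
        exact mul_le_mul hI hW (by positivity) (hint.trans hI)
    _ = exp (h * R) / (n - 1) * (σ ^ (1 - (n : ℝ)) * σ ^ (n : ℝ) * x) := by
        rw [rpow_natCast]; ring
    _ = exp (h * R) / (n - 1) * (σ * x) := by
        rw [← rpow_add hσ, sub_add_cancel, rpow_one]

theorem integral_Ioc_exp_mul_div_pow_mul_integral_le {h R t : ℝ} {n : ℕ} {ξ : ℝ → ℝ}
    (hh : 0 ≤ h) (hn : 2 ≤ n) (htR : t ≤ R) (hξ : IntegrableOn ξ (Ioc 0 t))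
    (hξ_nonneg : ∀ σ, 0 < σ → 0 ≤ ξ σ) (hξ_moment : IntegrableOn (fun σ => σ * ξ σ) (Ioi 0)) :
    ∫ s in Ioc 0 t, exp (h * s) / s ^ n * ∫ σ in Ioc 0 s, exp (-h * σ) * σ ^ n * ξ σ ≤
      exp (h * R) / (n - 1) * ∫ σ in Ioi 0, σ * ξ σ := by
  have hC : 0 ≤ exp (h * R) / (n - 1) := by
    have : (2 : ℝ) ≤ n := by exact_mod_cast hn
    exact div_nonneg (exp_pos _).le (by linarith)
  have hbound : ∀ s ∈ Ioc (0 : ℝ) t, ∀ σ ∈ Ioc 0 s,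
      ‖exp (h * s) / s ^ n * (exp (-h * σ) * σ ^ n * ξ σ)‖ ≤ exp (h * R) * ‖ξ σ‖ := by
    intro s hs σ hσ
    have hσ0 := hσ.1
    have hs0 : 0 < s := hσ0.trans_le hσ.2
    rw [← mul_assoc, norm_mul, Real.norm_of_nonneg (by positivity)]
    gcongr
    exact exp_mul_div_pow_mul_le n hh hσ0 hσ.2 (hs.2.trans htR)
  have hg : AEStronglyMeasurable (fun σ => exp (-h * σ) * σ ^ n * ξ σ)
      (volume.restrict (Ioc 0 t)) :=
    (by fun_prop : Continuous fun σ => exp (-h * σ) * σ ^ n).aestronglyMeasurable.mul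
      hξ.aestronglyMeasurable
  have hf : Measurable fun s : ℝ => exp (h * s) / s ^ n := by fun_prop
  rw [integral_Ioc_mul_integral_Ioc_swap (integrable_indicator_snd_le_fst_of_norm_le
    hf.aestronglyMeasurable hg hξ (exp_pos _).le hbound)]
  calc ∫ σ in Ioc 0 t, (∫ s in Icc σ t, exp (h * s) / s ^ n) * (exp (-h * σ) * σ ^ n * ξ σ)
      ≤ ∫ σ in Ioc 0 t, exp (h * R) / (n - 1) * (σ * ξ σ) := by
        refine integral_mono_of_nonneg ?_ ((hξ_moment.mono_set Ioc_subset_Ioi_self).const_mul _) ?_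
        · filter_upwards [ae_restrict_mem measurableSet_Ioc] with σ hσ
          have hσ0 := hσ.1
          have := hξ_nonneg σ hσ0
          refine mul_nonneg (setIntegral_nonneg measurableSet_Icc fun s hs => ?_) (by positivity)
          have : 0 < s := hσ0.trans_le hs.1
          positivity
        · filter_upwards [ae_restrict_mem measurableSet_Ioc] with σ hσ
          exact integral_Icc_exp_mul_div_pow_mul_le hh hn hσ.1 hσ.2 htR (hξ_nonneg σ hσ.1)
    _ = exp (h * R) / (n - 1) * ∫ σ in Ioc 0 t, σ * ξ σ := integral_const_mul _ _
    _ ≤ exp (h * R) / (n - 1) * ∫ σ in Ioi 0, σ * ξ σ := by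
        refine mul_le_mul_of_nonneg_left
          (setIntegral_mono_set hξ_moment ?_ Ioc_subset_Ioi_self.eventuallyLE) hC
        filter_upwards [ae_restrict_mem measurableSet_Ioi] with σ hσ
        exact mul_nonneg (le_of_lt hσ) (hξ_nonneg σ hσ)

theorem mul_comp_div_eq_mul_comp_inv_mul (g : ℝ → ℝ) {a : ℝ} (ha : 0 < a) :
    (fun σ => σ * g (σ / a)) = fun σ => a * ((fun u => u * g u) (a⁻¹ * σ)) := by
  ext σ
  rw [inv_mul_eq_div]
  field_simp

theorem integrableOn_Ioi_mul_comp_div {g : ℝ → ℝ} {a : ℝ} (ha : 0 < a)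
    (hg : IntegrableOn (fun u => u * g u) (Ioi 0)) :
    IntegrableOn (fun σ => σ * g (σ / a)) (Ioi 0) := by
  rw [mul_comp_div_eq_mul_comp_inv_mul g ha]
  refine Integrable.const_mul ?_ a
  rw [← IntegrableOn, integrableOn_Ioi_comp_mul_left_iff (fun u => u * g u) 0 (inv_pos.mpr ha),
    mul_zero]
  exact hg

theorem integral_Ioi_mul_comp_div (g : ℝ → ℝ) {a : ℝ} (ha : 0 < a) :
    ∫ σ in Ioi 0, σ * g (σ / a) = a ^ 2 * ∫ u in Ioi 0, u * g u := by
  rw [mul_comp_div_eq_mul_comp_inv_mul g ha, integral_const_mul,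
    integral_comp_mul_left_Ioi (fun u => u * g u) 0 (inv_pos.mpr ha), mul_zero, inv_inv,
    smul_eq_mul, ← mul_assoc, sq]

theorem stmt7_general (k : ℕ) (hk : 3 ≤ k) (hstar R a : ℝ) (hhs : 0 ≤ hstar)
    (ha : 0 < a)
    (S : ℝ → ℝ) (hSnn : ∀ t, 0 ≤ t → 0 ≤ S t) (hSanti : AntitoneOn S (Set.Ici 0))
    (hSint : IntegrableOn (fun t => t * S t) (Set.Ioi 0)) :
    ∀ t ∈ Set.Ioc (0 : ℝ) R,
      (∫ s in Set.Ioc (0 : ℝ) t, (Real.exp (hstar * s) / s ^ (k - 1)) *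
          ∫ σ in Set.Ioc (0 : ℝ) s,
            Real.exp (-hstar * σ) * σ ^ (k - 1) * ((k : ℝ) * S (σ / a))) ≤
        Real.exp (hstar * R) * k * (∫ u in Set.Ioi (0 : ℝ), u * S u) / ((k : ℝ) - 2)
          * a ^ 2 := by
  rintro t ⟨-, htR⟩
  have hξ : IntegrableOn (fun σ => (k : ℝ) * S (σ / a)) (Ioc 0 t) := by
    refine IntegrableOn.mono_set ?_ Ioc_subset_Icc_self
    refine AntitoneOn.integrableOn_isCompact isCompact_Icc fun x hx y hy hxy => ?_
    exact mul_le_mul_of_nonneg_left (hSanti (div_nonneg hx.1 ha.le) (div_nonneg hy.1 ha.le)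
      (div_le_div_of_nonneg_right hxy ha.le)) k.cast_nonneg
  have hξ_nonneg : ∀ σ, 0 < σ → 0 ≤ (k : ℝ) * S (σ / a) := fun σ hσ =>
    mul_nonneg k.cast_nonneg (hSnn _ (div_pos hσ ha).le)
  have hmoment : (fun σ => σ * ((k : ℝ) * S (σ / a))) = fun σ => (k : ℝ) * (σ * S (σ / a)) := by
    ext σ; ring
  have hbound := integral_Ioc_exp_mul_div_pow_mul_integral_le hhs (by omega : 2 ≤ k - 1) htR hξ
    hξ_nonneg (by rw [hmoment]; exact (integrableOn_Ioi_mul_comp_div ha hSint).const_mul _)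
  rw [hmoment, integral_const_mul, integral_Ioi_mul_comp_div S ha,
    Nat.cast_sub (by omega : 1 ≤ k)] at hbound
  refine hbound.trans_eq ?_
  ring

/-- L∞ bound in case k ≥ 3. With ξ(t) = k S(t/a) and
ψ(t) = ∫₀^t (e^{h*s}/s^{k-1})[∫₀^s e^{-h*σ}σ^{k-1}ξ(σ)dσ]ds, where S is non-increasing,
S = 1 on [0,1] and Ŝ = ∫₀^∞ tS(t)dt < ∞, one has ψ(t) ≤ (e^{h*R} k Ŝ/(k−2))·a² for
all t ∈ (0,R]. -/
theorem stmt7 (k : ℕ) (hk : 3 ≤ k) (hstar R a : ℝ) (hhs : 0 ≤ hstar) (hR : 0 < R)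
    (ha : 0 < a)
    (S : ℝ → ℝ) (hSnn : ∀ t, 0 ≤ t → 0 ≤ S t) (hSanti : AntitoneOn S (Set.Ici 0))
    (hS1 : ∀ t ∈ Set.Icc (0 : ℝ) 1, S t = 1)
    (hSint : IntegrableOn (fun t => t * S t) (Set.Ioi 0)) :
    ∀ t ∈ Set.Ioc (0 : ℝ) R,
      (∫ s in Set.Ioc (0 : ℝ) t, (Real.exp (hstar * s) / s ^ (k - 1)) *
          ∫ σ in Set.Ioc (0 : ℝ) s,
            Real.exp (-hstar * σ) * σ ^ (k - 1) * ((k : ℝ) * S (σ / a))) ≤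
        Real.exp (hstar * R) * k * (∫ u in Set.Ioi (0 : ℝ), u * S u) / ((k : ℝ) - 2)
          * a ^ 2 :=
  stmt7_general k hk hstar R a hhs ha S hSnn hSanti hSint
end

section
/- Let h* ≥ 0, R > 0, 0 < a ≤ R/e, and S : [0,∞) → [0,∞) non-increasing with S = 1 on [0,1] and Ŝ = ∫₀^∞ tS(t)max{1,|log t|}dt < ∞. Define ξ(t) = 2 S(t/a) and ψ(t) = ∫₀^t (e^{h*s}/s)[∫₀^s e^{-h*σ}σ ξ(σ)dσ]ds. Then ψ(t) ≤ 4 e^{h*R} Ŝ a² log(R/a) for all t ∈ (0,R]. -/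
/-! The inner integral `I(s) = ∫₀ˢ e^{-h*σ} σ ξ(σ) dσ` is at most `s²` (as `ξ ≤ 2`) and at most
`2a²Ŝ` (substitute `σ = a u` and use `∫₀^∞ u S(u) du ≤ Ŝ`). So the outer integrand `e^{h*s} I(s) / s`
is at most `e^{h*R} s` on `(0, a]` and `e^{h*R} 2a²Ŝ / s` on `(a, R]`, which gives
`ψ(t) ≤ e^{h*R} (a²/2 + 2a²Ŝ log(R/a))`. Finally `Ŝ ≥ ∫₀¹ u du = 1/2` and `log(R/a) ≥ 1` absorb
`a²/2` into the logarithmic term. -/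

open MeasureTheory Set Real

section ChangeOfVariables

variable {E : Type*} [NormedAddCommGroup E] {F : ℝ → E} {a : ℝ}

lemma integrableOn_Ioi_comp_div (hF : IntegrableOn F (Ioi 0)) (ha : 0 < a) :
    IntegrableOn (fun x => F (x / a)) (Ioi 0) := by
  simp_rw [div_eq_inv_mul]
  exact (integrableOn_Ioi_comp_mul_left_iff F 0 (inv_pos.2 ha)).2 (by rwa [mul_zero])

lemma integral_comp_div_Ioi [NormedSpace ℝ E] (F : ℝ → E) (ha : 0 < a) :
    ∫ x in Ioi 0, F (x / a) = a • ∫ x in Ioi 0, F x := by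
  simp_rw [div_eq_inv_mul]
  rw [integral_comp_mul_left_Ioi F 0 (inv_pos.2 ha), mul_zero, inv_inv]

end ChangeOfVariables

lemma setIntegral_Ioc_comp_div_le {F : ℝ → ℝ} {a : ℝ} (hF : IntegrableOn F (Ioi 0))
    (hF0 : ∀ u, 0 < u → 0 ≤ F u) (ha : 0 < a) (s : ℝ) :
    ∫ x in Ioc 0 s, F (x / a) ≤ a * ∫ u in Ioi 0, F u := by
  calc ∫ x in Ioc 0 s, F (x / a) ≤ ∫ x in Ioi 0, F (x / a) := by
        refine setIntegral_mono_set (integrableOn_Ioi_comp_div hF ha) ?_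
          Ioc_subset_Ioi_self.eventuallyLE
        filter_upwards [ae_restrict_mem measurableSet_Ioi] with x hx
        exact hF0 _ (div_pos hx ha)
    _ = a * ∫ u in Ioi 0, F u := integral_comp_div_Ioi F ha

lemma integrableOn_and_integral_Ioc_ite_le_div {a R : ℝ} (K : ℝ) (ha : 0 < a) (haR : a ≤ R) :
    IntegrableOn (fun s => if s ≤ a then s else K / s) (Ioc 0 R) ∧
      ∫ s in Ioc 0 R, (if s ≤ a then s else K / s) = a ^ 2 / 2 + K * log (R / a) := by
  have hlin : EqOn (fun s => if s ≤ a then s else K / s) id (Ioc 0 a) := fun s hs => if_pos hs.2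
  have hinv : EqOn (fun s => if s ≤ a then s else K / s) (fun s => K / s) (Ioc a R) :=
    fun s hs => if_neg (not_le.2 hs.1)
  have hzero : (0 : ℝ) ∉ uIcc a R := by
    rw [uIcc_of_le haR]
    exact fun h => ha.not_ge h.1
  have hlin_int : IntegrableOn (fun s => if s ≤ a then s else K / s) (Ioc 0 a) :=
    continuous_id.integrableOn_Ioc.congr_fun hlin.symm measurableSet_Ioc
  have hinv_int : IntegrableOn (fun s => if s ≤ a then s else K / s) (Ioc a R) :=
    ((continuousOn_const.div continuousOn_id fun s hs => (ha.trans_le hs.1).ne').integrableOn_Icc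
      |>.mono_set Ioc_subset_Icc_self).congr_fun hinv.symm measurableSet_Ioc
  rw [← Ioc_union_Ioc_eq_Ioc ha.le haR]
  refine ⟨hlin_int.union hinv_int, ?_⟩
  rw [setIntegral_union (Ioc_disjoint_Ioc_of_le le_rfl) measurableSet_Ioc hlin_int hinv_int,
    setIntegral_congr_fun measurableSet_Ioc hlin, setIntegral_congr_fun measurableSet_Ioc hinv,
    ← intervalIntegral.integral_of_le ha.le, ← intervalIntegral.integral_of_le haR]
  simp_rw [div_eq_mul_inv K]
  rw [intervalIntegral.integral_const_mul, integral_inv hzero]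
  simp [integral_id]

lemma setIntegral_exp_mul_div_mul_le {h a R t K : ℝ} {I : ℝ → ℝ} (hh : 0 ≤ h) (ha : 0 < a)
    (haR : a ≤ R) (htR : t ≤ R) (hI0 : ∀ s, 0 ≤ I s) (hIsq : ∀ s, 0 < s → I s ≤ s ^ 2)
    (hIK : ∀ s, I s ≤ K) :
    ∫ s in Ioc 0 t, exp (h * s) / s * I s ≤ exp (h * R) * (a ^ 2 / 2 + K * log (R / a)) := by
  set m := fun s => exp (h * R) * (if s ≤ a then s else K / s)
  obtain ⟨hint, hval⟩ := integrableOn_and_integral_Ioc_ite_le_div K ha haR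
  have hm_int : IntegrableOn m (Ioc 0 R) := hint.const_mul _
  have hK : 0 ≤ K := (hI0 0).trans (hIK 0)
  have hm0 : ∀ s ∈ Ioc 0 R, 0 ≤ m s := fun s hs => by
    have := hs.1
    positivity
  have hle : ∀ s ∈ Ioc 0 R, exp (h * s) / s * I s ≤ m s := by
    rintro s ⟨hs, hsR⟩
    calc exp (h * s) / s * I s ≤ exp (h * R) / s * I s := by gcongr; exact hI0 s
      _ ≤ m s := by
        simp only [m]
        split_ifs with hsa
        · calc exp (h * R) / s * I s ≤ exp (h * R) / s * s ^ 2 := by gcongr; exact hIsq s hs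
            _ = exp (h * R) * s := by field_simp
        · calc exp (h * R) / s * I s ≤ exp (h * R) / s * K := by gcongr; exact hIK s
            _ = exp (h * R) * (K / s) := by ring
  calc ∫ s in Ioc 0 t, exp (h * s) / s * I s ≤ ∫ s in Ioc 0 t, m s :=
        setIntegral_mono_of_nonneg (fun s hs => by have := hs.1; have := hI0 s; positivity)
          (fun s hs => hle s ⟨hs.1, hs.2.trans htR⟩) (hm_int.mono_set (Ioc_subset_Ioc_right htR))
    _ ≤ ∫ s in Ioc 0 R, m s := by
        refine setIntegral_mono_set hm_int ?_ (Ioc_subset_Ioc_right htR).eventuallyLE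
        filter_upwards [ae_restrict_mem measurableSet_Ioc] with s hs using hm0 s hs
    _ = exp (h * R) * (a ^ 2 / 2 + K * log (R / a)) := by
        rw [integral_const_mul, hval]

section Weight

variable {h a : ℝ} {S : ℝ → ℝ}

lemma one_half_le_integral_mul_max_abs_log (hSnn : ∀ t, 0 ≤ t → 0 ≤ S t)
    (hS1 : ∀ t ∈ Icc (0 : ℝ) 1, S t = 1)
    (hSint : IntegrableOn (fun t => t * S t * max 1 |log t|) (Ioi 0)) :
    1 / 2 ≤ ∫ u in Ioi 0, u * S u * max 1 |log u| := by
  calc (1 : ℝ) / 2 = ∫ u in Ioc 0 1, u := by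
        rw [← intervalIntegral.integral_of_le zero_le_one, integral_id]; norm_num
    _ ≤ ∫ u in Ioc 0 1, u * S u * max 1 |log u| := by
        refine setIntegral_mono_of_nonneg (fun u hu => hu.1.le) (fun u hu => ?_)
          (hSint.mono_set Ioc_subset_Ioi_self)
        rw [hS1 u ⟨hu.1.le, hu.2⟩, mul_one]
        exact le_mul_of_one_le_right hu.1.le (le_max_left _ _)
    _ ≤ ∫ u in Ioi 0, u * S u * max 1 |log u| := by
        refine setIntegral_mono_set hSint ?_ Ioc_subset_Ioi_self.eventuallyLE
        filter_upwards [ae_restrict_mem measurableSet_Ioi] with u hu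
        have hu0 : 0 < u := hu
        have := hSnn u hu0.le
        positivity

lemma integral_exp_neg_mul_mul_nonneg (hSnn : ∀ t, 0 ≤ t → 0 ≤ S t) (ha : 0 < a) (s : ℝ) :
    0 ≤ ∫ σ in Ioc 0 s, exp (-h * σ) * σ * (2 * S (σ / a)) := by
  refine setIntegral_nonneg measurableSet_Ioc fun σ hσ => ?_
  have := hSnn (σ / a) (div_nonneg hσ.1.le ha.le)
  have := hσ.1
  positivity

lemma exp_neg_mul_le_one (hh : 0 ≤ h) {σ : ℝ} (hσ : 0 ≤ σ) : exp (-h * σ) ≤ 1 :=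
  exp_le_one_iff.2 (mul_nonpos_of_nonpos_of_nonneg (neg_nonpos.2 hh) hσ)

lemma integral_exp_neg_mul_mul_le_sq (hh : 0 ≤ h) (ha : 0 < a) (hSnn : ∀ t, 0 ≤ t → 0 ≤ S t)
    (hS_le : ∀ t, 0 ≤ t → S t ≤ 1) {s : ℝ} (hs : 0 ≤ s) :
    ∫ σ in Ioc 0 s, exp (-h * σ) * σ * (2 * S (σ / a)) ≤ s ^ 2 := by
  calc ∫ σ in Ioc 0 s, exp (-h * σ) * σ * (2 * S (σ / a)) ≤ ∫ σ in Ioc 0 s, 1 * σ * (2 * 1) := by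
        refine setIntegral_mono_of_nonneg (fun σ hσ => ?_) (fun σ hσ => ?_)
          (by fun_prop : Continuous fun σ : ℝ => 1 * σ * (2 * 1)).integrableOn_Ioc
        all_goals
          have hσ0 : 0 < σ := hσ.1
          have hS0 := hSnn (σ / a) (div_nonneg hσ0.le ha.le)
        · positivity
        · gcongr
          · exact exp_neg_mul_le_one hh hσ0.le
          · exact hS_le _ (div_nonneg hσ0.le ha.le)
    _ = s ^ 2 := by
        rw [← intervalIntegral.integral_of_le hs]; simp [integral_id]

lemma integral_exp_neg_mul_mul_le_integral_mul_max_abs_log (hh : 0 ≤ h) (ha : 0 < a)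
    (hSnn : ∀ t, 0 ≤ t → 0 ≤ S t)
    (hSint : IntegrableOn (fun t => t * S t * max 1 |log t|) (Ioi 0)) (s : ℝ) :
    ∫ σ in Ioc 0 s, exp (-h * σ) * σ * (2 * S (σ / a)) ≤
      2 * a ^ 2 * ∫ u in Ioi 0, u * S u * max 1 |log u| := by
  set F := fun u => u * S u * max 1 |log u|
  have hF0 : ∀ u, 0 < u → 0 ≤ F u := fun u hu => by
    have := hSnn u hu.le
    positivity
  calc ∫ σ in Ioc 0 s, exp (-h * σ) * σ * (2 * S (σ / a))
      ≤ ∫ σ in Ioc 0 s, 2 * a * F (σ / a) := by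
        refine setIntegral_mono_of_nonneg (fun σ hσ => ?_) (fun σ hσ => ?_)
          (((integrableOn_Ioi_comp_div hSint ha).mono_set Ioc_subset_Ioi_self).const_mul _)
        all_goals
          have hσ0 : 0 < σ := hσ.1
          have hS0 := hSnn (σ / a) (div_nonneg hσ0.le ha.le)
        · positivity
        · calc exp (-h * σ) * σ * (2 * S (σ / a)) ≤ 1 * σ * (2 * S (σ / a)) * 1 := by
                rw [mul_one]; gcongr; exact exp_neg_mul_le_one hh hσ0.le
            _ ≤ 1 * σ * (2 * S (σ / a)) * max 1 |log (σ / a)| := by gcongr; exact le_max_left _ _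
            _ = 2 * a * F (σ / a) := by simp only [F]; field_simp
    _ = 2 * a * ∫ σ in Ioc 0 s, F (σ / a) := integral_const_mul _ _
    _ ≤ 2 * a * (a * ∫ u in Ioi 0, F u) := by
        gcongr; exact setIntegral_Ioc_comp_div_le hSint hF0 ha s
    _ = 2 * a ^ 2 * ∫ u in Ioi 0, F u := by ring

end Weight

/-- L∞ bound in case k = 2. With ξ(t) = 2S(t/a) and
ψ(t) = ∫₀^t (e^{h*s}/s)[∫₀^s e^{-h*σ}σξ(σ)dσ]ds, where h* ≥ 0, R > 0, 0 < a ≤ R/e,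
S non-increasing, S = 1 on [0,1] and Ŝ = ∫₀^∞ tS(t)max{1,|log t|}dt < ∞, one has
ψ(t) ≤ 4 e^{h*R} Ŝ a² log(R/a) for all t ∈ (0,R]. -/
theorem stmt8 (hstar R a : ℝ) (hhs : 0 ≤ hstar) (hR : 0 < R) (ha : 0 < a)
    (haR : a ≤ R / Real.exp 1)
    (S : ℝ → ℝ) (hSnn : ∀ t, 0 ≤ t → 0 ≤ S t) (hSanti : AntitoneOn S (Set.Ici 0))
    (hS1 : ∀ t ∈ Set.Icc (0 : ℝ) 1, S t = 1)
    (hSint : IntegrableOn (fun t => t * S t * max 1 |Real.log t|) (Set.Ioi 0)) :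
    ∀ t ∈ Set.Ioc (0 : ℝ) R,
      (∫ s in Set.Ioc (0 : ℝ) t, (Real.exp (hstar * s) / s) *
          ∫ σ in Set.Ioc (0 : ℝ) s, Real.exp (-hstar * σ) * σ * (2 * S (σ / a))) ≤
        4 * Real.exp (hstar * R) *
          (∫ u in Set.Ioi (0 : ℝ), u * S u * max 1 |Real.log u|) *
          a ^ 2 * Real.log (R / a) := by
  rintro t ⟨-, htR⟩
  set Shat := ∫ u in Ioi 0, u * S u * max 1 |log u|
  have hS_le : ∀ t, 0 ≤ t → S t ≤ 1 := fun t ht =>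
    (hSanti self_mem_Ici ht ht).trans_eq (hS1 0 ⟨le_rfl, zero_le_one⟩)
  have haR' : a ≤ R := haR.trans (div_le_self hR.le (one_le_exp zero_le_one))
  have hlog : 1 ≤ log (R / a) := by
    rw [le_log_iff_exp_le (by positivity), le_div_iff₀ ha, mul_comm, ← le_div_iff₀ (exp_pos 1)]
    exact haR
  have hShat : 1 / 2 ≤ Shat := one_half_le_integral_mul_max_abs_log hSnn hS1 hSint
  calc _ ≤ exp (hstar * R) * (a ^ 2 / 2 + 2 * a ^ 2 * Shat * log (R / a)) :=
        setIntegral_exp_mul_div_mul_le hhs ha haR' htR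
          (integral_exp_neg_mul_mul_nonneg hSnn ha)
          (fun s hs => integral_exp_neg_mul_mul_le_sq hhs ha hSnn hS_le hs.le)
          (integral_exp_neg_mul_mul_le_integral_mul_max_abs_log hhs ha hSnn hSint)
    _ ≤ exp (hstar * R) * (4 * Shat * a ^ 2 * log (R / a)) := by
        gcongr
        nlinarith [sq_nonneg a, mul_le_mul hShat hlog zero_le_one (by linarith)]
    _ = 4 * exp (hstar * R) * Shat * a ^ 2 * log (R / a) := by ring
end

section
/- Let φ : M → ℝⁿ be a C² isometric immersion of a k-dimensional manifold with mean curvature vector H satisfying |H| ≤ h, and let w ∈ C²(ℝⁿ) satisfy P_k^-(∇²w) − h|∇w| ≥ ξ∘w pointwise for some function ξ. Then v = w∘φ satisfies Δ_M v ≥ ξ∘v pointwise on M, where Δ_M is the Laplace–Beltrami operator of the induced metric. -/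
section ChainRule

variable {𝕜 E F G : Type*} [NontriviallyNormedField 𝕜]
  [NormedAddCommGroup E] [NormedSpace 𝕜 E] [NormedAddCommGroup F] [NormedSpace 𝕜 F]
  [NormedAddCommGroup G] [NormedSpace 𝕜 G]

theorem iteratedFDeriv_two_comp_apply {φ : E → F} {w : F → G}
    (hφ : ContDiff 𝕜 2 φ) (hw : ContDiff 𝕜 2 w) (p u v : E) :
    iteratedFDeriv 𝕜 2 (w ∘ φ) p ![u, v] =
      iteratedFDeriv 𝕜 2 w (φ p) ![fderiv 𝕜 φ p u, fderiv 𝕜 φ p v]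
        + fderiv 𝕜 w (φ p) (iteratedFDeriv 𝕜 2 φ p ![u, v]) := by
  have hφ1 : Differentiable 𝕜 φ := hφ.differentiable two_ne_zero
  have hDw : Differentiable 𝕜 (fderiv 𝕜 w) :=
    (hw.fderiv_right (by norm_num : (1 : WithTop ℕ∞) + 1 ≤ 2)).differentiable one_ne_zero
  have hDφ : Differentiable 𝕜 (fderiv 𝕜 φ) :=
    (hφ.fderiv_right (by norm_num : (1 : WithTop ℕ∞) + 1 ≤ 2)).differentiable one_ne_zero
  have hD : fderiv 𝕜 (w ∘ φ) = fun x => (fderiv 𝕜 w (φ x)).comp (fderiv 𝕜 φ x) :=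
    funext fun x => fderiv_comp x (hw.differentiable two_ne_zero _) (hφ1 x)
  have hDwφ : fderiv 𝕜 (fun x => fderiv 𝕜 w (φ x)) p =
      (fderiv 𝕜 (fderiv 𝕜 w) (φ p)).comp (fderiv 𝕜 φ p) :=
    fderiv_comp p (hDw _) (hφ1 p)
  have hDwφ_diff : DifferentiableAt 𝕜 (fun x => fderiv 𝕜 w (φ x)) p := (hDw _).comp p (hφ1 p)
  rw [iteratedFDeriv_two_apply, iteratedFDeriv_two_apply, iteratedFDeriv_two_apply, hD,
    fderiv_clm_comp hDwφ_diff (hDφ p), hDwφ]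
  simp [add_comm]

end ChainRule

section MinMax

variable {E : Type*} [NormedAddCommGroup E] [InnerProductSpace ℝ E]

theorem neg_opNorm_le_apply_of_norm_eq_one
    (B : ContinuousMultilinearMap ℝ (fun _ : Fin 2 => E) ℝ) {u : E} (hu : ‖u‖ = 1) :
    -‖B‖ ≤ B ![u, u] := by
  have hB := B.le_opNorm ![u, u]
  simp only [Fin.prod_univ_two, Matrix.cons_val_zero, Matrix.cons_val_one, hu, mul_one,
    Real.norm_eq_abs] at hB
  exact neg_le_of_abs_le hB

theorem bddBelow_sum_orthonormal_apply (k : ℕ)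
    (B : ContinuousMultilinearMap ℝ (fun _ : Fin 2 => E) ℝ) :
    BddBelow {t : ℝ | ∃ e : Fin k → E, Orthonormal ℝ e ∧ t = ∑ i, B ![e i, e i]} := by
  refine ⟨-(k * ‖B‖), ?_⟩
  rintro t ⟨e, he, rfl⟩
  calc -(k * ‖B‖) = ∑ _i : Fin k, -‖B‖ := by simp
    _ ≤ ∑ i, B ![e i, e i] :=
      Finset.sum_le_sum fun i _ => neg_opNorm_le_apply_of_norm_eq_one B (he.1 i)

end MinMax

theorem PkHess_le_sum_of_orthonormal {n k : ℕ} (w : EuclideanSpace ℝ (Fin n) → ℝ)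
    (x : EuclideanSpace ℝ (Fin n)) {e : Fin k → EuclideanSpace ℝ (Fin n)}
    (he : Orthonormal ℝ e) :
    PkHess n k w x ≤ ∑ i, iteratedFDeriv ℝ 2 w x ![e i, e i] :=
  csInf_le (bddBelow_sum_orthonormal_apply k _) ⟨e, he, rfl⟩

theorem neg_norm_gradient_mul_le_fderiv {E : Type*} [NormedAddCommGroup E]
    [InnerProductSpace ℝ E] [CompleteSpace E] (f : E → ℝ) (x v : E) :
    -(‖gradient f x‖ * ‖v‖) ≤ fderiv ℝ f x v := by
  rw [← inner_gradient_left]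
  exact neg_le_of_abs_le (abs_real_inner_le_norm _ _)

theorem stmt17_general (k n : ℕ)
    (φ : EuclideanSpace ℝ (Fin k) → EuclideanSpace ℝ (Fin n))
    (w : EuclideanSpace ℝ (Fin n) → ℝ) (ξ : ℝ → ℝ) (h : ℝ)
    (hφ : ContDiff ℝ 2 φ) (hw : ContDiff ℝ 2 w)
    (p : EuclideanSpace ℝ (Fin k))
    (horth : ∀ i j : Fin k,
      (inner ℝ (fderiv ℝ φ p (EuclideanSpace.single i 1))
        (fderiv ℝ φ p (EuclideanSpace.single j 1)) : ℝ) =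
        if i = j then 1 else 0)
    (hH : ‖∑ i : Fin k, iteratedFDeriv ℝ 2 φ p
        ![EuclideanSpace.single i 1, EuclideanSpace.single i 1]‖ ≤ h)
    (hsub : ∀ y : EuclideanSpace ℝ (Fin n),
      ξ (w y) ≤ PkHess n k w y - h * ‖gradient w y‖) :
    ξ ((w ∘ φ) p) ≤ ∑ i : Fin k, iteratedFDeriv ℝ 2 (w ∘ φ) p
        ![EuclideanSpace.single i 1, EuclideanSpace.single i 1] := by
  set e : Fin k → EuclideanSpace ℝ (Fin n) := fun i => fderiv ℝ φ p (EuclideanSpace.single i 1)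
  set H := ∑ i : Fin k, iteratedFDeriv ℝ 2 φ p
    ![EuclideanSpace.single i 1, EuclideanSpace.single i 1]
  have he : Orthonormal ℝ e := orthonormal_iff_ite.mpr horth
  have hgradH : -(h * ‖gradient w (φ p)‖) ≤ fderiv ℝ w (φ p) H :=
    calc -(h * ‖gradient w (φ p)‖) ≤ -(‖gradient w (φ p)‖ * ‖H‖) := by
          rw [mul_comm h]; gcongr
      _ ≤ fderiv ℝ w (φ p) H := neg_norm_gradient_mul_le_fderiv w (φ p) H
  calc ξ ((w ∘ φ) p) ≤ PkHess n k w (φ p) - h * ‖gradient w (φ p)‖ := hsub (φ p)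
    _ ≤ ∑ i, iteratedFDeriv ℝ 2 w (φ p) ![e i, e i] + fderiv ℝ w (φ p) H := by
      rw [sub_eq_add_neg]; exact add_le_add (PkHess_le_sum_of_orthonormal w (φ p) he) hgradH
    _ = _ := by
      simp only [e, H, map_sum, ← Finset.sum_add_distrib, iteratedFDeriv_two_comp_apply hφ hw]

/-- Let φ : M^k → ℝⁿ be a C² isometric immersion, expressed at a point p
in geodesic normal coordinates (coordinate frame ∂ᵢφ(p) orthonormal, Christoffel
symbols vanishing at p, so that Δ_M(w∘φ)(p) = Σᵢ ∂ᵢ²(w∘φ)(p) and the mean curvature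
vector is H = Σᵢ ∂ᵢ²φ(p)). If |H| ≤ h and w ∈ C²(ℝⁿ) satisfies
P_k^-(∇²w) − h|∇w| ≥ ξ∘w pointwise, then v = w∘φ satisfies Δ_M v ≥ ξ∘v at p. -/
theorem stmt17 (k n : ℕ) (hk1 : 1 ≤ k)
    (φ : EuclideanSpace ℝ (Fin k) → EuclideanSpace ℝ (Fin n))
    (w : EuclideanSpace ℝ (Fin n) → ℝ) (ξ : ℝ → ℝ) (h : ℝ) (hh : 0 ≤ h)
    (hφ : ContDiff ℝ 2 φ) (hw : ContDiff ℝ 2 w)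
    (p : EuclideanSpace ℝ (Fin k))
    (horth : ∀ i j : Fin k,
      (inner ℝ (fderiv ℝ φ p (EuclideanSpace.single i 1))
        (fderiv ℝ φ p (EuclideanSpace.single j 1)) : ℝ) =
        if i = j then 1 else 0)
    (hchristoffel : ∀ i j l : Fin k,
      (inner ℝ (iteratedFDeriv ℝ 2 φ p
          ![EuclideanSpace.single i 1, EuclideanSpace.single j 1])
        (fderiv ℝ φ p (EuclideanSpace.single l 1)) : ℝ) = 0)
    (hH : ‖∑ i : Fin k, iteratedFDeriv ℝ 2 φ p
        ![EuclideanSpace.single i 1, EuclideanSpace.single i 1]‖ ≤ h)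
    (hsub : ∀ y : EuclideanSpace ℝ (Fin n),
      ξ (w y) ≤ PkHess n k w y - h * ‖gradient w y‖) :
    ξ ((w ∘ φ) p) ≤ ∑ i : Fin k, iteratedFDeriv ℝ 2 (w ∘ φ) p
        ![EuclideanSpace.single i 1, EuclideanSpace.single i 1] :=
  stmt17_general k n φ w ξ h hφ hw p horth hH hsub
end
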